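/- arXiv:math/0611275 — 3 statements merged into one kernel-verified Lean document; each statement's English description precedes it below -/
import Mathlib

section
/- (Complete monotonicity of the power-series generator.) For every λ ≥ 1, the function φ : (0,∞) → ℝ defined by φ(x) = 1 − (1 − e^{−x})^{1/λ} is completely monotone on (0,∞): it is infinitely differentiable and (−1)^k φ^{(k)}(x) ≥ 0 for all integers k ≥ 0 and all x > 0. -/
/-- A function `f : ℝ → ℝ` is completely monotone on `(0,∞)`. -/
def IsCompletelyMonotoneOn (f : ℝ → ℝ) : Prop :=
  ContDiffOn ℝ (⊤ : ℕ∞) f (Set.Ioi 0) ∧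
  ∀ (k : ℕ) (t : ℝ), 0 < t →
    0 ≤ (-1 : ℝ) ^ k * iteratedDerivWithin k f (Set.Ioi 0) t

open Real Set

noncomputable def pcCM (a : ℝ) : ℕ → ℝ
  | 0 => 0
  | 1 => a
  | n+2 => pcCM a (n+1) * (((n : ℝ) + 1) - a) / ((n : ℝ) + 2)

lemma pcCM_rec (a : ℝ) (n : ℕ) :
    ((n : ℝ) + 2) * pcCM a (n+2) = (((n : ℝ) + 1) - a) * pcCM a (n+1) := by
  show ((n : ℝ) + 2) * (pcCM a (n+1) * (((n : ℝ) + 1) - a) / ((n : ℝ) + 2)) = _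
  have h : ((n : ℝ) + 2) ≠ 0 := by positivity
  field_simp

lemma pcCM_nonneg {a : ℝ} (ha0 : 0 ≤ a) (ha1 : a ≤ 1) : ∀ n, 0 ≤ pcCM a n
  | 0 => le_refl _
  | 1 => ha0
  | n+2 => by
      have ih := pcCM_nonneg ha0 ha1 (n+1)
      show 0 ≤ pcCM a (n+1) * (((n : ℝ) + 1) - a) / ((n : ℝ) + 2)
      have h1 : (0:ℝ) ≤ ((n : ℝ) + 1) - a := by
        have : (0:ℝ) ≤ (n:ℝ) := Nat.cast_nonneg n
        linarith
      positivity

lemma pcCM_le_one {a : ℝ} (ha0 : 0 ≤ a) (ha1 : a ≤ 1) : ∀ n, pcCM a n ≤ 1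
  | 0 => zero_le_one
  | 1 => ha1
  | n+2 => by
      have ih := pcCM_le_one ha0 ha1 (n+1)
      have ih0 := pcCM_nonneg ha0 ha1 (n+1)
      show pcCM a (n+1) * (((n : ℝ) + 1) - a) / ((n : ℝ) + 2) ≤ 1
      have h2 : (0:ℝ) < (n : ℝ) + 2 := by positivity
      rw [div_le_one h2]
      have h1 : (0:ℝ) ≤ ((n : ℝ) + 1) - a := by
        have : (0:ℝ) ≤ (n:ℝ) := Nat.cast_nonneg n
        linarith
      calc pcCM a (n+1) * (((n : ℝ) + 1) - a) ≤ 1 * (((n : ℝ) + 1) - a) := by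
            exact mul_le_mul_of_nonneg_right ih h1
        _ ≤ (n : ℝ) + 2 := by linarith

lemma summable_dom (j : ℕ) (C : ℝ) {b : ℝ} (hb0 : 0 < b) (hb1 : b < 1) {f : ℕ → ℝ}
    (hf : ∀ n, |f n| ≤ C * (((n : ℝ) + 1) ^ j * b ^ n)) : Summable f := by
  have hg : Summable (fun n : ℕ => ((n : ℝ)) ^ j * b ^ n) :=
    summable_pow_mul_geometric_of_norm_lt_one j (by rwa [Real.norm_eq_abs, abs_of_pos hb0])
  have hshift : Summable (fun n : ℕ => (((n : ℝ)) + 1) ^ j * b ^ (n + 1)) := by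
    have h2 := hg.comp_injective Nat.succ_injective
    refine h2.congr fun n => ?_
    simp [Function.comp, Nat.succ_eq_add_one]
  have hmain : Summable (fun n : ℕ => (((n : ℝ)) + 1) ^ j * b ^ n) := by
    have := hshift.mul_left (1 / b)
    refine this.congr fun n => ?_
    field_simp
    ring
  exact Summable.of_norm_bounded (hmain.mul_left C) (fun n => by rw [Real.norm_eq_abs]; exact hf n)

lemma pcCM_zero (a : ℝ) : pcCM a 0 = 0 := rfl

lemma pcCM_one (a : ℝ) : pcCM a 1 = a := rfl

variable {a : ℝ}

lemma pc_abs {a : ℝ} (ha0 : 0 ≤ a) (ha1 : a ≤ 1) (n : ℕ) : |pcCM a n| ≤ 1 := by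
  rw [abs_of_nonneg (pcCM_nonneg ha0 ha1 n)]; exact pcCM_le_one ha0 ha1 n

lemma summable_S (ha0 : 0 ≤ a) (ha1 : a ≤ 1) {u b : ℝ} (hb0 : 0 < b) (hb1 : b < 1)
    (hu : |u| ≤ b) : Summable (fun n : ℕ => pcCM a n * u ^ n) := by
  refine summable_dom 0 1 hb0 hb1 fun n => ?_
  rw [abs_mul, abs_pow, pow_zero, one_mul, one_mul]
  calc |pcCM a n| * |u| ^ n ≤ 1 * b ^ n :=
        mul_le_mul (pc_abs ha0 ha1 n) (pow_le_pow_left₀ (abs_nonneg u) hu n)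
          (by positivity) zero_le_one
    _ = b ^ n := one_mul _

lemma summable_A (ha0 : 0 ≤ a) (ha1 : a ≤ 1) {u b : ℝ} (hb0 : 0 < b) (hb1 : b < 1)
    (hu : |u| ≤ b) : Summable (fun n : ℕ => pcCM a n * ((n : ℝ) * u ^ (n - 1))) := by
  refine summable_dom 1 (1/b) hb0 hb1 fun n => ?_
  match n with
  | 0 => simp; positivity
  | (m+1) =>
    rw [abs_mul, abs_mul, abs_pow]
    simp only [Nat.add_sub_cancel, Nat.cast_add, Nat.cast_one, pow_one]
    have h1 : |pcCM a (m+1)| * (|((m:ℝ)+1)| * |u| ^ m) ≤ ((m:ℝ)+1) * b ^ m := by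
      rw [abs_of_nonneg (by positivity : (0:ℝ) ≤ (m:ℝ)+1)]
      have := mul_le_mul (pc_abs ha0 ha1 (m+1))
        (mul_le_mul_of_nonneg_left (pow_le_pow_left₀ (abs_nonneg u) hu m)
          (by positivity : (0:ℝ) ≤ (m:ℝ)+1)) (by positivity) zero_le_one
      rw [one_mul] at this
      exact this
    have h2 : ((m:ℝ)+1) * b ^ m ≤ 1 / b * ((((m:ℝ)+1) + 1) * b ^ (m+1)) := by
      rw [pow_succ]
      have hb' : (0:ℝ) ≤ b ^ m := by positivity
      have : 1 / b * ((((m:ℝ)+1) + 1) * (b ^ m * b)) = (((m:ℝ)+1)+1) * b ^ m := by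
        field_simp
      rw [this]
      nlinarith
    exact h1.trans h2

/-- the ODE: (1-u) * A u = a * (1 - S u) for 0 ≤ u < 1 -/
lemma pc_ode (ha0 : 0 ≤ a) (ha1 : a ≤ 1) {u : ℝ} (hu0 : 0 ≤ u) (hu1 : u < 1) :
    (1 - u) * (∑' n : ℕ, pcCM a n * ((n : ℝ) * u ^ (n - 1)))
      = a * (1 - ∑' n : ℕ, pcCM a n * u ^ n) := by
  set b : ℝ := (1 + u) / 2 with hb
  have hb0 : 0 < b := by rw [hb]; linarith
  have hb1 : b < 1 := by rw [hb]; linarith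
  have hub : |u| ≤ b := by rw [abs_of_nonneg hu0, hb]; linarith
  have hSsum : Summable (fun n : ℕ => pcCM a n * u ^ n) := summable_S ha0 ha1 hb0 hb1 hub
  have hAsum : Summable (fun n : ℕ => pcCM a n * ((n : ℝ) * u ^ (n - 1))) :=
    summable_A ha0 ha1 hb0 hb1 hub
  set g : ℕ → ℝ := fun m => pcCM a (m+1) * (((m : ℝ) + 1) * u ^ m) with hg
  have hgsum : Summable g := by
    have := hAsum.comp_injective Nat.succ_injective
    refine this.congr fun m => ?_
    simp [Function.comp, hg, Nat.succ_eq_add_one]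
  have hA : (∑' n : ℕ, pcCM a n * ((n : ℝ) * u ^ (n - 1))) = ∑' m : ℕ, g m := by
    rw [Summable.tsum_eq_zero_add hAsum]
    simp [hg]
  have hSshift : Summable (fun m : ℕ => pcCM a (m+1) * u ^ (m+1)) := by
    have h := hSsum.comp_injective Nat.succ_injective
    refine h.congr fun m => ?_
    simp [Function.comp, Nat.succ_eq_add_one]
  have hS : (∑' n : ℕ, pcCM a n * u ^ n) = ∑' m : ℕ, pcCM a (m+1) * u ^ (m+1) := by
    rw [Summable.tsum_eq_zero_add hSsum]
    simp [pcCM_zero]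
  set A := ∑' m : ℕ, g m with hAdef
  set S := ∑' m : ℕ, pcCM a (m+1) * u ^ (m+1) with hSdef
  -- key: A = a + (u * A - a * S)
  have key : A = a + (u * A - a * S) := by
    have h1 : A = g 0 + ∑' m : ℕ, g (m+1) := Summable.tsum_eq_zero_add hgsum
    have hg0 : g 0 = a := by simp [hg, pcCM_one]
    have h2 : u * A - a * S
        = ∑' m : ℕ, (u * g m - a * (pcCM a (m+1) * u ^ (m+1))) := by
      rw [hAdef, hSdef, ← tsum_mul_left, ← tsum_mul_left]
      exact (Summable.tsum_sub (hgsum.mul_left u) (hSshift.mul_left a)).symm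
    have h3 : ∀ m : ℕ, u * g m - a * (pcCM a (m+1) * u ^ (m+1)) = g (m+1) := by
      intro m
      have hrec := pcCM_rec a m
      have : g (m+1) = (((m:ℝ)+2) * pcCM a (m+2)) * u ^ (m+1) := by
        simp [hg]; ring
      rw [this, hrec, hg]
      rw [pow_succ]
      ring
    calc A = g 0 + ∑' m : ℕ, g (m+1) := h1
      _ = a + ∑' m : ℕ, (u * g m - a * (pcCM a (m+1) * u ^ (m+1))) := by
          rw [hg0, (tsum_congr h3).symm]
      _ = a + (u * A - a * S) := by rw [h2]
  rw [hA, hS]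
  linear_combination key

/-- derivative of the power series on (-b,b) -/
lemma hasDerivAt_S (ha0 : 0 ≤ a) (ha1 : a ≤ 1) {b : ℝ} (hb0 : 0 < b) (hb1 : b < 1)
    {y : ℝ} (hy : y ∈ Ioo (-b) b) :
    HasDerivAt (fun z : ℝ => ∑' n : ℕ, pcCM a n * z ^ n)
      (∑' n : ℕ, pcCM a n * ((n : ℝ) * y ^ (n - 1))) y := by
  have husum : Summable (fun n : ℕ => 1 / b * (((n : ℝ) + 1) ^ 1 * b ^ n)) := by
    refine Summable.mul_left _ (summable_dom 1 1 hb0 hb1 fun n => ?_)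
    rw [one_mul, abs_of_nonneg (by positivity)]
  refine hasDerivAt_tsum_of_isPreconnected
    (g := fun (n : ℕ) (z : ℝ) => pcCM a n * z ^ n)
    (g' := fun (n : ℕ) (z : ℝ) => pcCM a n * ((n : ℝ) * z ^ (n - 1)))
    (y₀ := (0:ℝ))
    husum isOpen_Ioo isPreconnected_Ioo
    (fun n z _ => ?_) (fun n z hz => ?_) ?_ ?_ hy
  · exact (hasDerivAt_pow n z).const_mul (pcCM a n)
  · -- bound
    rw [Real.norm_eq_abs]
    match n with
    | 0 => simp; positivity
    | (m+1) =>
      simp only [Nat.add_sub_cancel, Nat.cast_add, Nat.cast_one]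
      rw [abs_mul, abs_mul, abs_pow, abs_of_nonneg (by positivity : (0:ℝ) ≤ (m:ℝ)+1)]
      have hzb : |z| ≤ b := le_of_lt (abs_lt.2 ⟨hz.1, hz.2⟩)
      have h1 : |pcCM a (m+1)| * (((m:ℝ)+1) * |z| ^ m) ≤ ((m:ℝ)+1) * b ^ m := by
        have := mul_le_mul (pc_abs ha0 ha1 (m+1))
          (mul_le_mul_of_nonneg_left (pow_le_pow_left₀ (abs_nonneg z) hzb m)
            (by positivity : (0:ℝ) ≤ (m:ℝ)+1)) (by positivity) zero_le_one
        rw [one_mul] at this; exact this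
      refine h1.trans ?_
      rw [pow_one, pow_succ]
      have hbm : (0:ℝ) ≤ b ^ m := by positivity
      have heq : 1 / b * ((((m:ℝ)+1) + 1) * (b ^ m * b)) = (((m:ℝ)+1)+1) * b ^ m := by
        field_simp
      rw [heq]
      nlinarith
  · exact ⟨by linarith, hb0⟩ 
  · refine (summable_zero).congr fun n => ?_
    match n with
    | 0 => simp [pcCM_zero]
    | (m+1) => simp

/-- The binomial series identity. -/
lemma pc_binomial (ha0 : 0 ≤ a) (ha1 : a ≤ 1) {u : ℝ} (hu0 : 0 ≤ u) (hu1 : u < 1) :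
    ∑' n : ℕ, pcCM a n * u ^ n = 1 - (1 - u) ^ a := by
  set b : ℝ := (1 + u) / 2 with hbdef
  have hb0 : 0 < b := by rw [hbdef]; linarith
  have hb1 : b < 1 := by rw [hbdef]; linarith
  have hub : u < b := by rw [hbdef]; linarith
  set S : ℝ → ℝ := fun z => ∑' n : ℕ, pcCM a n * z ^ n with hSdef
  set T : ℝ → ℝ := fun z => (1 - S z) * (1 - z) ^ (-a) with hTdef
  have hTderiv : ∀ x ∈ Icc (0:ℝ) u, HasDerivAt T 0 x := by
    intro x hx
    have hx0 : 0 ≤ x := hx.1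
    have hxb : x < b := lt_of_le_of_lt hx.2 hub
    have hx1 : x < 1 := lt_trans hxb hb1
    have hx1' : (0:ℝ) < 1 - x := by linarith
    have hmem : x ∈ Ioo (-b) b := ⟨by linarith, hxb⟩
    have hS : HasDerivAt S (∑' n : ℕ, pcCM a n * ((n : ℝ) * x ^ (n - 1))) x :=
      hasDerivAt_S ha0 ha1 hb0 hb1 hmem
    set A := ∑' n : ℕ, pcCM a n * ((n : ℝ) * x ^ (n - 1)) with hAdef
    have hG : HasDerivAt (fun z => 1 - S z) (-A) x := hS.const_sub 1
    have hbase : HasDerivAt (fun z : ℝ => 1 - z) (-1) x := (hasDerivAt_id x).const_sub 1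
    have hH : HasDerivAt (fun z : ℝ => (1 - z) ^ (-a)) ((-1) * (-a) * (1 - x) ^ (-a - 1)) x := by
      have := hbase.rpow_const (p := -a) (Or.inl (by simpa using ne_of_gt hx1'))
      simpa using this
    have hmul := hG.mul hH
    have hode := pc_ode ha0 ha1 hx0 hx1
    rw [← hAdef] at hode
    have hpow : (1 - x) * (1 - x) ^ (-a - 1) = (1 - x) ^ (-a) := by
      nth_rewrite 1 [← Real.rpow_one (1 - x)]
      rw [← Real.rpow_add hx1']
      norm_num
    have hzero : -A * ((fun z : ℝ => (1 - z) ^ (-a)) x)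
        + (1 - S x) * ((-1) * (-a) * (1 - x) ^ (-a - 1)) = 0 := by
      show -A * (1 - x) ^ (-a) + (1 - S x) * ((-1) * (-a) * (1 - x) ^ (-a - 1)) = 0
      have h1 : (1 - S x) * ((-1) * (-a) * (1 - x) ^ (-a - 1))
          = (a * (1 - S x)) * (1 - x) ^ (-a - 1) := by ring
      rw [h1, ← hode]
      calc -A * (1 - x) ^ (-a) + (1 - x) * A * (1 - x) ^ (-a - 1)
          = -A * (1 - x) ^ (-a) + A * ((1 - x) * (1 - x) ^ (-a - 1)) := by ring
        _ = -A * (1 - x) ^ (-a) + A * (1 - x) ^ (-a) := by rw [hpow]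
        _ = 0 := by ring
    rw [hzero] at hmul
    exact hmul
  have hconst := constant_of_has_deriv_right_zero
    (f := T) (a := 0) (b := u)
    (fun x hx => (hTderiv x hx).continuousAt.continuousWithinAt)
    (fun x hx => (hTderiv x (Ico_subset_Icc_self hx)).hasDerivWithinAt)
    u (right_mem_Icc.2 hu0)
  have h1u : (0:ℝ) < 1 - u := by linarith
  have hS0 : S 0 = 0 := by
    have hz : ∀ n : ℕ, pcCM a n * (0:ℝ) ^ n = 0 := by
      intro n
      match n with
      | 0 => simp [pcCM_zero]
      | (m+1) => simp
    calc S 0 = ∑' n : ℕ, (0:ℝ) := tsum_congr hz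
      _ = 0 := tsum_zero
  have hT0 : T 0 = 1 := by
    show (1 - S 0) * (1 - 0) ^ (-a) = 1
    rw [hS0]
    norm_num
  have hTu : (1 - S u) * (1 - u) ^ (-a) = 1 := by
    have := hconst
    rw [hT0] at this
    exact this
  have hfinal : 1 - S u = (1 - u) ^ a := by
    have h2 : ((1 - S u) * (1 - u) ^ (-a)) * (1 - u) ^ a = (1 - u) ^ a := by
      rw [hTu, one_mul]
    rwa [mul_assoc, ← Real.rpow_add h1u, neg_add_cancel, Real.rpow_zero, mul_one] at h2
  show S u = 1 - (1 - u) ^ a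
  linarith

noncomputable def DkCM (a : ℝ) (k : ℕ) (x : ℝ) : ℝ :=
  ∑' n : ℕ, pcCM a n * (n : ℝ) ^ k * rexp (-((n : ℝ) * x))

lemma exp_base_lt_one {t : ℝ} (ht : 0 < t) : rexp (-t) < 1 :=
  Real.exp_lt_one_iff.2 (by linarith)

lemma exp_pow_eq (t : ℝ) (n : ℕ) : rexp (-((n : ℝ) * t)) = (rexp (-t)) ^ n := by
  rw [← Real.exp_nat_mul]
  ring_nf

lemma summable_DkCM {a : ℝ} (ha0 : 0 ≤ a) (ha1 : a ≤ 1) (k : ℕ) {t : ℝ} (ht : 0 < t) :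
    Summable (fun n : ℕ => pcCM a n * (n : ℝ) ^ k * rexp (-((n : ℝ) * t))) := by
  refine summable_dom k 1 (Real.exp_pos (-t)) (exp_base_lt_one ht) fun n => ?_
  rw [one_mul, exp_pow_eq t n, abs_mul, abs_mul, abs_pow, abs_pow, Nat.abs_cast,
    abs_of_nonneg (Real.exp_pos (-t)).le]
  have h1 : (n:ℝ) ^ k ≤ ((n:ℝ) + 1) ^ k :=
    pow_le_pow_left₀ (Nat.cast_nonneg n) (by linarith) k
  have h2 : |pcCM a n| * (n:ℝ) ^ k ≤ ((n:ℝ) + 1) ^ k := by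
    calc |pcCM a n| * (n:ℝ) ^ k ≤ 1 * ((n:ℝ)+1) ^ k :=
          mul_le_mul (pc_abs ha0 ha1 n) h1 (by positivity) zero_le_one
      _ = ((n:ℝ)+1) ^ k := one_mul _
  exact mul_le_mul_of_nonneg_right h2 (by positivity)

lemma hasDerivAt_DkCM {a : ℝ} (ha0 : 0 ≤ a) (ha1 : a ≤ 1) (k : ℕ) {t : ℝ} (ht : 0 < t) :
    HasDerivAt (fun x => DkCM a k x) (-(DkCM a (k+1) t)) t := by
  have hb0 : (0:ℝ) < rexp (-(t/2)) := Real.exp_pos _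
  have hb1 : rexp (-(t/2)) < 1 := exp_base_lt_one (by linarith)
  have husum : Summable (fun n : ℕ => ((n : ℝ) + 1) ^ (k+1) * (rexp (-(t/2))) ^ n) := by
    refine summable_dom (k+1) 1 hb0 hb1 fun n => ?_
    rw [one_mul, abs_of_nonneg (by positivity)]
  have hmain : HasDerivAt (fun x => DkCM a k x)
      (∑' n : ℕ, (pcCM a n * (n:ℝ) ^ k) * (rexp (-((n:ℝ) * t)) * (-(n:ℝ)))) t := by
    refine hasDerivAt_tsum_of_isPreconnected
      (g := fun (n : ℕ) (x : ℝ) => pcCM a n * (n:ℝ) ^ k * rexp (-((n:ℝ) * x)))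
      (g' := fun (n : ℕ) (x : ℝ) => (pcCM a n * (n:ℝ) ^ k) * (rexp (-((n:ℝ) * x)) * (-(n:ℝ))))
      (y₀ := t)
      husum (isOpen_Ioi (a := t/2)) isPreconnected_Ioi
      (fun n z _ => ?_) (fun n z hz => ?_) (mem_Ioi.2 (by linarith : t/2 < t))
      (summable_DkCM ha0 ha1 k ht) (mem_Ioi.2 (by linarith : t/2 < t))
    · -- HasDerivAt of each term
      have hlin : HasDerivAt (fun x : ℝ => -((n:ℝ) * x)) (-(n:ℝ)) z := by
        have h := (hasDerivAt_id z).const_mul (-(n:ℝ))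
        simpa [neg_mul, mul_one] using h
      exact (hlin.exp).const_mul (pcCM a n * (n:ℝ) ^ k)
    · -- bound
      rw [Real.norm_eq_abs, abs_mul, abs_mul, abs_mul, abs_neg, abs_pow,
        abs_of_nonneg (Real.exp_pos _).le,
        abs_of_nonneg (Nat.cast_nonneg n : (0:ℝ) ≤ n)]
      have hz2 : t/2 < z := hz
      have hexp : rexp (-((n:ℝ) * z)) ≤ (rexp (-(t/2))) ^ n := by
        rw [← exp_pow_eq]
        apply Real.exp_le_exp.2
        have : (n:ℝ) * (t/2) ≤ (n:ℝ) * z :=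
          mul_le_mul_of_nonneg_left hz2.le (Nat.cast_nonneg n)
        linarith
      have h1 : |pcCM a n| * (n:ℝ) ^ k * (rexp (-((n:ℝ) * z)) * (n:ℝ))
          ≤ ((n:ℝ)+1) ^ (k+1) * (rexp (-(t/2))) ^ n := by
        have hnk : |pcCM a n| * (n:ℝ) ^ k * (n:ℝ) ≤ ((n:ℝ)+1) ^ (k+1) := by
          have e1 : |pcCM a n| * (n:ℝ) ^ k * (n:ℝ) ≤ 1 * ((n:ℝ) ^ k * (n:ℝ)) := by
            rw [one_mul]
            have := mul_le_mul_of_nonneg_right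
              (mul_le_mul_of_nonneg_right (pc_abs ha0 ha1 n) (by positivity : (0:ℝ) ≤ (n:ℝ)^k))
              (Nat.cast_nonneg n : (0:ℝ) ≤ (n:ℝ))
            simpa using this
          have e2 : (n:ℝ) ^ k * (n:ℝ) ≤ ((n:ℝ)+1) ^ (k+1) := by
            calc (n:ℝ) ^ k * (n:ℝ) = (n:ℝ) ^ (k+1) := by rw [pow_succ]
              _ ≤ ((n:ℝ)+1) ^ (k+1) := pow_le_pow_left₀ (Nat.cast_nonneg n) (by linarith) _
          linarith [e1, e2]
        calc |pcCM a n| * (n:ℝ) ^ k * (rexp (-((n:ℝ) * z)) * (n:ℝ))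
            = (|pcCM a n| * (n:ℝ) ^ k * (n:ℝ)) * rexp (-((n:ℝ) * z)) := by ring
          _ ≤ ((n:ℝ)+1) ^ (k+1) * (rexp (-(t/2))) ^ n := by
              have h3 : (0:ℝ) ≤ |pcCM a n| * (n:ℝ) ^ k * (n:ℝ) := by positivity
              exact mul_le_mul hnk hexp (Real.exp_pos _).le (by positivity)
      exact h1
  have heq : (∑' n : ℕ, (pcCM a n * (n:ℝ) ^ k) * (rexp (-((n:ℝ) * t)) * (-(n:ℝ))))
      = -(DkCM a (k+1) t) := by
    rw [DkCM, ← tsum_neg]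
    refine tsum_congr fun n => ?_
    rw [pow_succ]
    ring
  rw [heq] at hmain
  exact hmain

lemma itDW_eq (k : ℕ) (f : ℝ → ℝ) {x : ℝ} (hx : x ∈ Ioi (0:ℝ)) :
    iteratedDerivWithin k f (Ioi 0) x = iteratedDeriv k f x := by
  unfold iteratedDerivWithin iteratedDeriv
  rw [iteratedFDerivWithin_of_isOpen k isOpen_Ioi hx]

lemma iter_eq {a : ℝ} (ha0 : 0 ≤ a) (ha1 : a ≤ 1) :
    ∀ k : ℕ, ∀ t : ℝ, 0 < t →
      iteratedDeriv k (fun x : ℝ => 1 - (1 - rexp (-x)) ^ a) t = (-1:ℝ)^k * DkCM a k t := by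
  intro k
  induction k with
  | zero =>
    intro t ht
    rw [iteratedDeriv_zero, pow_zero, one_mul]
    have hu0 : 0 ≤ rexp (-t) := (Real.exp_pos _).le
    have hu1 : rexp (-t) < 1 := Real.exp_lt_one_iff.2 (by linarith)
    have hbin := pc_binomial ha0 ha1 hu0 hu1
    show 1 - (1 - rexp (-t)) ^ a = DkCM a 0 t
    rw [DkCM, ← hbin]
    refine tsum_congr fun n => ?_
    rw [exp_pow_eq, pow_zero, mul_one]
  | succ k ih =>
    intro t ht
    have hEv : iteratedDeriv k (fun x : ℝ => 1 - (1 - rexp (-x)) ^ a)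
        =ᶠ[nhds t] fun x => (-1:ℝ)^k * DkCM a k x := by
      filter_upwards [Ioi_mem_nhds ht] with y hy using ih y hy
    rw [iteratedDeriv_succ, hEv.deriv_eq]
    have hD := (hasDerivAt_DkCM ha0 ha1 k ht).const_mul ((-1:ℝ)^k)
    rw [hD.deriv, pow_succ]
    ring

/-- Complete monotonicity of the power-series generator: for every `λ ≥ 1`, the
function `φ(x) = 1 − (1 − e^{−x})^{1/λ}` is completely monotone on `(0,∞)`. -/
theorem powerSeriesGenerator_completelyMonotone (lam : ℝ) (hlam : 1 ≤ lam) :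
    IsCompletelyMonotoneOn
      (fun x : ℝ => 1 - (1 - Real.exp (-x)) ^ (1 / lam)) := by
  have hlam0 : (0:ℝ) < lam := lt_of_lt_of_le one_pos hlam
  set a : ℝ := 1 / lam with ha
  have ha0 : 0 ≤ a := by positivity
  have ha1 : a ≤ 1 := by rw [ha, div_le_one hlam0]; exact hlam
  constructor
  · intro x hx
    have hx0 : (0:ℝ) < x := hx
    have hpos : 0 < 1 - rexp (-x) := by
      have : rexp (-x) < 1 := Real.exp_lt_one_iff.2 (by linarith)
      linarith
    have hinner : ContDiffAt ℝ (⊤ : ℕ∞) (fun x : ℝ => 1 - rexp (-x)) x :=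
      contDiffAt_const.sub ((Real.contDiff_exp.comp contDiff_neg).contDiffAt)
    exact (contDiffAt_const.sub (hinner.rpow_const_of_ne (ne_of_gt hpos))).contDiffWithinAt
  · intro k t ht
    rw [itDW_eq k _ (mem_Ioi.2 ht), iter_eq ha0 ha1 k t ht, ← mul_assoc, ← mul_pow,
      neg_mul_neg, one_mul, one_pow, one_mul]
    refine tsum_nonneg fun n => ?_
    have h1 := pcCM_nonneg ha0 ha1 n
    positivity
end

section
/- (Complete monotonicity of the Frank generator.) For every λ > 0, the function φ : (0,∞) → ℝ defined by φ(x) = −(1/λ) · ln( 1 − (1 − e^{−λ}) e^{−x} ) is completely monotone on (0,∞): it is infinitely differentiable and (−1)^k φ^{(k)}(x) ≥ 0 for all integers k ≥ 0 and all x > 0. -/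
open Polynomial Set Real

/-- Polynomials appearing in the derivatives of the Frank generator. -/
noncomputable def frankP : ℕ → Polynomial ℝ
  | 0 => Polynomial.X
  | (k+1) => Polynomial.X *
      ((frankP k).derivative * (1 - Polynomial.X) + (((k : ℝ) + 1)) • frankP k)

lemma frankP_coeff (k : ℕ) :
    (∀ n, 0 ≤ (frankP k).coeff n) ∧ (∀ n, k + 1 < n → (frankP k).coeff n = 0) := by
  induction k with
  | zero =>
    constructor
    · intro n; simp [frankP, Polynomial.coeff_X]
      split <;> norm_num
    · intro n hn; simp [frankP, Polynomial.coeff_X]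
      omega
  | succ k ih =>
    obtain ⟨hpos, hzero⟩ := ih
    set P := frankP k with hP
    set D := P.derivative * (1 - Polynomial.X) + (((k : ℝ) + 1)) • P with hD
    have hDcoeff : ∀ m, D.coeff m =
        P.coeff (m+1) * (m+1) - (P.derivative * Polynomial.X).coeff m
          + ((k : ℝ) + 1) * P.coeff m := by
      intro m
      simp [hD, mul_one_sub, Polynomial.coeff_derivative]
    have hDpos : ∀ m, 0 ≤ D.coeff m := by
      intro m
      rcases m with _ | m'
      · rw [hDcoeff]
        simp only [Polynomial.coeff_mul_X_zero]
        have e1 := hpos 1; have e0 := hpos 0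
        have hk : (0:ℝ) ≤ (k:ℝ) + 1 := by positivity
        push_cast
        nlinarith [mul_nonneg hk e0]
      · rw [hDcoeff]
        rw [Polynomial.coeff_mul_X, Polynomial.coeff_derivative]
        by_cases hm : m' + 1 ≤ k + 1
        · have h1 := hpos (m' + 2); have h2 := hpos (m' + 1)
          have hle : ((m' : ℝ)) ≤ (k : ℝ) := by
            exact_mod_cast Nat.lt_succ_iff.mp hm
          have t1 : (0:ℝ) ≤ P.coeff (m'+2) * ((m':ℝ)+2) := by positivity
          have t2 : (0:ℝ) ≤ P.coeff (m'+1) * ((k:ℝ) - (m':ℝ)) :=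
            mul_nonneg h2 (by linarith)
          push_cast
          nlinarith
        · push_neg at hm
          have h1 : P.coeff (m' + 1 + 1) = 0 := hzero _ (by omega)
          have h2 : P.coeff (m' + 1) = 0 := hzero _ (by omega)
          simp only [h1, h2]
          norm_num
    have hDzero : ∀ m, k + 1 < m → D.coeff m = 0 := by
      intro m hm
      rcases m with _ | m'
      · omega
      · rw [hDcoeff, Polynomial.coeff_mul_X, Polynomial.coeff_derivative]
        have h1 : P.coeff (m' + 1 + 1) = 0 := hzero _ (by omega)
        have h2 : P.coeff (m' + 1) = 0 := hzero _ (by omega)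
        simp only [h1, h2]
        norm_num
    constructor
    · intro n
      rcases n with _ | m
      · simp [frankP, ← hP, ← hD]
      · rw [show frankP (k+1) = Polynomial.X * D from rfl, Polynomial.coeff_X_mul]
        exact hDpos m
    · intro n hn
      rcases n with _ | m
      · omega
      · rw [show frankP (k+1) = Polynomial.X * D from rfl, Polynomial.coeff_X_mul]
        exact hDzero m (by omega)

lemma eval_nonneg_of_coeff_nonneg (p : Polynomial ℝ) (hp : ∀ n, 0 ≤ p.coeff n)
    {x : ℝ} (hx : 0 ≤ x) : 0 ≤ p.eval x := by
  rw [Polynomial.eval_eq_sum_range]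
  exact Finset.sum_nonneg fun i _ => mul_nonneg (hp i) (pow_nonneg hx i)

/-- Complete monotonicity of the Frank generator: for every `λ > 0`, the
function `φ(x) = −(1/λ) ln(1 − (1 − e^{−λ}) e^{−x})` is completely monotone on
`(0,∞)`. -/
theorem frankGenerator_completelyMonotone (lam : ℝ) (hlam : 0 < lam) :
    IsCompletelyMonotoneOn
      (fun x : ℝ =>
        -(1 / lam) * Real.log (1 - (1 - Real.exp (-lam)) * Real.exp (-x))) := by
  set c : ℝ := 1 - Real.exp (-lam) with hc
  have hc0 : 0 < c := by
    have : Real.exp (-lam) < 1 := Real.exp_lt_one_iff.mpr (by linarith)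
    simp [hc]; linarith
  have hc1 : c < 1 := by
    have : 0 < Real.exp (-lam) := Real.exp_pos _
    simp [hc]; linarith
  set u : ℝ → ℝ := fun x => c * Real.exp (-x) with hu
  set φ : ℝ → ℝ := fun x => -(1 / lam) * Real.log (1 - u x) with hφ
  have hu_pos : ∀ x : ℝ, 0 < u x := fun x => mul_pos hc0 (Real.exp_pos _)
  have hu_lt : ∀ x : ℝ, 0 ≤ x → u x < 1 := by
    intro x hx
    have h1 : Real.exp (-x) ≤ 1 := Real.exp_le_one_iff.mpr (by linarith)
    calc u x = c * Real.exp (-x) := rfl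
    _ ≤ c * 1 := by nlinarith [Real.exp_pos (-x)]
    _ < 1 := by linarith
  have hden : ∀ x : ℝ, 0 ≤ x → 0 < 1 - u x := fun x hx => by linarith [hu_lt x hx]
  have hu_deriv : ∀ x : ℝ, HasDerivAt u (-(u x)) x := by
    intro x
    have h := ((hasDerivAt_neg x).exp).const_mul c
    exact h.congr_deriv (by simp only [hu]; ring)
  have h1u_deriv : ∀ x : ℝ, HasDerivAt (fun y => 1 - u y) (u x) x := by
    intro x
    have h := (hasDerivAt_const x (1:ℝ)).sub (hu_deriv x)
    simp only [sub_neg_eq_add, zero_add] at h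
    exact h
  -- the key formula for iterated derivatives
  have key : ∀ k : ℕ, ∀ x ∈ Set.Ioi (0:ℝ),
      iteratedDerivWithin (k+1) φ (Set.Ioi 0) x =
        (-1)^(k+1) * (1 / lam) *
          ((frankP k).eval (u x) / (1 - u x)^(k+1)) := by
    intro k
    induction k with
    | zero =>
      intro x hx
      have hxpos : (0:ℝ) < x := hx
      have hne : 1 - u x ≠ 0 := ne_of_gt (hden x hxpos.le)
      have hder : HasDerivAt φ (-(1/lam) * (u x / (1 - u x))) x := by
        exact ((h1u_deriv x).log hne).const_mul (-(1/lam))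
      rw [iteratedDerivWithin_one,
        derivWithin_of_isOpen isOpen_Ioi hx, hder.deriv]
      simp [frankP]
      try ring
    | succ k ih =>
      intro x hx
      have hxpos : (0:ℝ) < x := hx
      have hne : 1 - u x ≠ 0 := ne_of_gt (hden x hxpos.le)
      rw [iteratedDerivWithin_succ,
        derivWithin_of_isOpen isOpen_Ioi hx]
      have heq : (iteratedDerivWithin (k+1) φ (Set.Ioi 0)) =ᶠ[nhds x]
          (fun y => (-1)^(k+1) * (1 / lam) *
            ((frankP k).eval (u y) / (1 - u y)^(k+1))) := by
        filter_upwards [isOpen_Ioi.mem_nhds hx] with y hy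
        exact ih y hy
      rw [heq.deriv_eq]
      have hnum : HasDerivAt (fun y => (frankP k).eval (u y))
          ((frankP k).derivative.eval (u x) * (-(u x))) x :=
        ((frankP k).hasDerivAt (u x)).comp x (hu_deriv x)
      have hdenf : HasDerivAt (fun y => (1 - u y)^(k+1))
          ((k+1) * (1 - u x)^k * (u x)) x := by
        have := (h1u_deriv x).pow (k+1)
        simp only [Nat.cast_add, Nat.cast_one, add_tsub_cancel_right, mul_one] at this
        exact this
      have hq := hnum.div hdenf (pow_ne_zero _ hne)
      have hG := hq.const_mul ((-1:ℝ)^(k+1) * (1 / lam))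
      erw [hG.deriv]
      have hpev : (frankP (k+1)).eval (u x) =
          u x * ((frankP k).derivative.eval (u x) * (1 - u x)
            + ((k:ℝ)+1) * (frankP k).eval (u x)) := by
        simp [frankP]
      rw [hpev]
      have hme : (1 - u x)^(k+1) ≠ 0 := pow_ne_zero _ hne
      field_simp
      try ring
  constructor
  · -- smoothness
    have h1 : ContDiff ℝ (⊤ : ℕ∞) (fun x : ℝ => 1 - c * Real.exp (-x)) :=
      contDiff_const.sub (contDiff_const.mul (Real.contDiff_exp.comp contDiff_neg))
    have h2 : ContDiffOn ℝ (⊤ : ℕ∞) (fun x : ℝ => Real.log (1 - c * Real.exp (-x)))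
        (Set.Ioi 0) := by
      apply ContDiffOn.log h1.contDiffOn
      intro x hx
      exact ne_of_gt (hden x (le_of_lt hx))
    refine ContDiffOn.congr (h2.const_smul (-(1/lam))) ?_
    intro x _
    simp [hφ, hu, smul_eq_mul]
  · intro k t ht
    rcases k with _ | k
    · simp only [pow_zero, one_mul, iteratedDerivWithin_zero]
      have hlog : Real.log (1 - u t) ≤ 0 := by
        apply Real.log_nonpos
        · linarith [hden t ht.le]
        · linarith [hu_pos t]
      have : -(1/lam) * Real.log (1 - u t) ≥ 0 := by
        have h1 : 0 < 1/lam := by positivity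
        nlinarith
      exact this
    · rw [key k t ht]
      have h1 : ((-1:ℝ))^(k+1) * ((-1:ℝ))^(k+1) = 1 := by
        rw [← pow_add]
        exact Even.neg_one_pow ⟨k+1, by ring⟩
      rw [show ((-1:ℝ))^(k+1) * ((-1:ℝ)^(k+1) * (1 / lam) *
          ((frankP k).eval (u t) / (1 - u t)^(k+1))) =
          ((-1:ℝ)^(k+1) * (-1:ℝ)^(k+1)) * ((1 / lam) *
          ((frankP k).eval (u t) / (1 - u t)^(k+1))) by ring, h1, one_mul]
      have hev : 0 ≤ (frankP k).eval (u t) :=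
        eval_nonneg_of_coeff_nonneg _ (frankP_coeff k).1 (hu_pos t).le
      have hd : 0 < (1 - u t)^(k+1) := pow_pos (hden t ht.le) _
      positivity
end

section
/- (Geometric average of generalised Cauchy covariances.) Let n ≥ 1, and for each i = 1, …, n let δ_i ∈ (0,1], ε_i > 0, and θ_i ≥ 0 with ∑_{i=1}^n θ_i = 1. Then the function C : ℝ^n → ℝ defined by C(x_1, …, x_n) = ∏_{i=1}^n (1 + |x_i|^{δ_i})^{−ε_i θ_i} is positive definite on ℝ^n. -/
open scoped BigOperators
open MeasureTheory Set

namespace GCGA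

def PSDf {m : ℕ} (M : Fin m → Fin m → ℝ) : Prop :=
  ∀ c : Fin m → ℝ, 0 ≤ ∑ k, ∑ l, c k * c l * M k l

lemma psdf_gram {m : ℕ} {ι : Type*} [Fintype ι] (P : ι → Fin m → ℝ) :
    PSDf (fun k l => ∑ i, P i k * P i l) := by
  intro c
  have e1 : ∀ k l : Fin m, c k * c l * ∑ i, P i k * P i l
      = ∑ i, (c k * P i k) * (c l * P i l) := by
    intro k l; rw [Finset.mul_sum]; exact Finset.sum_congr rfl fun i _ => by ring
  simp only [e1]
  have e2 : ∀ k : Fin m, ∑ l, ∑ i, (c k * P i k) * (c l * P i l)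
      = ∑ i, ∑ l, (c k * P i k) * (c l * P i l) := fun k => Finset.sum_comm
  simp only [e2]
  rw [Finset.sum_comm]
  refine Finset.sum_nonneg fun i _ => ?_
  have e3 : ∑ k, ∑ l, (c k * P i k) * (c l * P i l)
      = (∑ k, c k * P i k) * (∑ l, c l * P i l) := (Finset.sum_mul_sum _ _ _ _).symm
  rw [e3]; exact mul_self_nonneg _

lemma PSDf.gram {m : ℕ} {M : Fin m → Fin m → ℝ} (hsym : ∀ k l, M k l = M l k)
    (h : PSDf M) : ∃ P : Fin m → Fin m → ℝ, ∀ k l, M k l = ∑ i, P i k * P i l := by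
  have hps : (Matrix.of M).PosSemidef := by
    constructor
    · ext k l
      simpa [Matrix.conjTranspose_apply] using hsym l k
    · intro x
      have h' := h x
      simp only [Matrix.of_apply, star_trivial, Finsupp.sum_fintype, mul_zero, zero_mul, Finset.sum_const_zero, implies_true]
      simp only [mul_assoc, ← Finset.mul_sum]
      calc (0:ℝ) ≤ ∑ k, ∑ l, x k * x l * M k l := h'
        _ = ∑ k, x k * ∑ l, M k l * x l := by
            refine Finset.sum_congr rfl fun k _ => ?_
            rw [Finset.mul_sum]
            exact Finset.sum_congr rfl fun l _ => by ring
  obtain ⟨B, hB⟩ : ∃ B : Matrix (Fin m) (Fin m) ℝ, Matrix.of M = B.conjTranspose * B := by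
    open scoped MatrixOrder in
    have h0 : 0 ≤ Matrix.of M := hps.nonneg
    open scoped MatrixOrder in
    exact ⟨CFC.sqrt (Matrix.of M), by
      rw [← Matrix.star_eq_conjTranspose, (CFC.sqrt_nonneg _).isSelfAdjoint.star_eq,
        CFC.sqrt_mul_sqrt_self _ h0]⟩
  refine ⟨fun i k => B i k, fun k l => ?_⟩
  have h2 : (Matrix.of M) k l = (B.conjTranspose * B) k l := by rw [hB]
  simpa [Matrix.mul_apply, Matrix.conjTranspose_apply] using h2

lemma PSDf.mul {m : ℕ} {M N : Fin m → Fin m → ℝ}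
    (hMs : ∀ k l, M k l = M l k) (hNs : ∀ k l, N k l = N l k)
    (hM : PSDf M) (hN : PSDf N) : PSDf (fun k l => M k l * N k l) := by
  obtain ⟨P, hP⟩ := hM.gram hMs
  obtain ⟨Q, hQ⟩ := hN.gram hNs
  have e : (fun k l => M k l * N k l)
      = fun k l => ∑ p : Fin m × Fin m, (P p.1 k * Q p.2 k) * (P p.1 l * Q p.2 l) := by
    funext k l
    rw [hP, hQ, Finset.sum_mul_sum, ← Finset.sum_product']
    exact Finset.sum_congr rfl fun p _ => by ring
  rw [e]
  exact psdf_gram _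

lemma psdf_const {m : ℕ} : PSDf (fun _ _ : Fin m => (1:ℝ)) := by
  intro c
  calc (0:ℝ) ≤ (∑ k, c k) * (∑ l, c l) := mul_self_nonneg _
    _ = ∑ k, ∑ l, c k * c l * 1 := by rw [Finset.sum_mul_sum]; simp

lemma PSDf.pow {m : ℕ} {M : Fin m → Fin m → ℝ} (hMs : ∀ k l, M k l = M l k)
    (hM : PSDf M) : ∀ p : ℕ, PSDf (fun k l => M k l ^ p)
  | 0 => by simpa using psdf_const
  | (p+1) => by
      have hp := PSDf.pow hMs hM p
      have hsymp : ∀ k l : Fin m, M k l ^ p = M l k ^ p := fun k l => by rw [hMs]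
      have h2 := hp.mul hsymp hMs hM
      have e : (fun k l : Fin m => M k l ^ p * M k l) = fun k l => M k l ^ (p+1) := by
        funext k l; rw [pow_succ]
      rwa [e] at h2

lemma PSDf.expEntry {m : ℕ} {M : Fin m → Fin m → ℝ} (hMs : ∀ k l, M k l = M l k)
    (hM : PSDf M) : PSDf (fun k l => Real.exp (M k l)) := by
  intro c
  show 0 ≤ ∑ k, ∑ l, c k * c l * Real.exp (M k l)
  have hsum : ∀ k l : Fin m, Summable (fun p : ℕ => c k * c l * (M k l ^ p / (Nat.factorial p : ℝ))) :=
    fun k l => (Real.summable_pow_div_factorial (M k l)).mul_left _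
  have hexp : ∀ k l : Fin m, c k * c l * Real.exp (M k l)
      = ∑' p : ℕ, c k * c l * (M k l ^ p / (Nat.factorial p : ℝ)) := by
    intro k l
    rw [Real.exp_eq_exp_ℝ, NormedSpace.exp_eq_tsum_div, tsum_mul_left]
  simp only [hexp]
  have swap1 : ∀ k : Fin m, ∑ l, ∑' p : ℕ, c k * c l * (M k l ^ p / (Nat.factorial p : ℝ))
      = ∑' p : ℕ, ∑ l, c k * c l * (M k l ^ p / (Nat.factorial p : ℝ)) :=
    fun k => (Summable.tsum_finsetSum (fun l _ => hsum k l)).symm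
  simp only [swap1]
  have hsum2 : ∀ k : Fin m, Summable (fun p : ℕ => ∑ l, c k * c l * (M k l ^ p / (Nat.factorial p : ℝ))) :=
    fun k => summable_sum (fun l _ => hsum k l)
  rw [← Summable.tsum_finsetSum (fun k _ => hsum2 k)]
  refine tsum_nonneg fun p => ?_
  have e : ∀ k l : Fin m, c k * c l * (M k l ^ p / (Nat.factorial p : ℝ))
      = (c k * c l * M k l ^ p) * ((Nat.factorial p : ℝ))⁻¹ := fun k l => by ring
  simp only [e]
  simp only [← Finset.sum_mul]
  exact mul_nonneg (hM.pow hMs p c) (by positivity)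




noncomputable def F (δ x : ℝ) : ℝ → ℝ := fun u => (1 - Real.cos (u * x)) * u ^ (-(1+δ))

lemma F_cont (δ x : ℝ) : ContinuousOn (F δ x) (Ioi 0) := by
  apply ContinuousOn.mul
  · exact (continuous_const.sub
      (Real.continuous_cos.comp (continuous_id.mul continuous_const))).continuousOn
  · exact continuousOn_id.rpow_const fun u hu => Or.inl (ne_of_gt hu)

lemma F_nonneg (δ x : ℝ) : ∀ u ∈ Ioi (0:ℝ), 0 ≤ F δ x u := fun u hu =>
  mul_nonneg (by nlinarith [Real.cos_le_one (u*x)]) (Real.rpow_nonneg (le_of_lt hu) _)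

lemma one_sub_cos_le (t : ℝ) : 1 - Real.cos t ≤ t^2/2 := by
  have h1 := Real.sin_sq_eq_half_sub (t/2)
  have h2 := Real.sin_sq_le_sq (x := t/2)
  have h3 : 2 * (t/2) = t := by ring
  rw [h3] at h1
  nlinarith

lemma F_integrable {δ : ℝ} (hδ0 : 0 < δ) (hδ1 : δ ≤ 1) (x : ℝ) :
    IntegrableOn (F δ x) (Ioi 0) := by
  have h1 : IntegrableOn (F δ x) (Ioc 0 1) := by
    have hbig : IntegrableOn (fun u : ℝ => x^2/2 * u ^ (1-δ)) (Ioc 0 1) := by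
      have h := intervalIntegral.intervalIntegrable_rpow' (r := 1-δ) (a := (0:ℝ)) (b := (1:ℝ)) (by linarith)
      rw [intervalIntegrable_iff_integrableOn_Ioc_of_le zero_le_one] at h
      exact h.const_mul _
    refine hbig.mono' (((F_cont δ x).mono Ioc_subset_Ioi_self).aestronglyMeasurable
      measurableSet_Ioc) ?_
    refine (ae_restrict_iff' measurableSet_Ioc).mpr (Filter.Eventually.of_forall fun u hu => ?_)
    have hu0 : 0 < u := hu.1
    have hF0 : 0 ≤ F δ x u := F_nonneg δ x u hu0
    rw [Real.norm_eq_abs, abs_of_nonneg hF0]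
    have hcos : 1 - Real.cos (u*x) ≤ (u*x)^2/2 := one_sub_cos_le (u*x)
    have hw : (0:ℝ) ≤ u ^ (-(1+δ)) := Real.rpow_nonneg hu0.le _
    have key : (u*x)^2/2 * u ^ (-(1+δ)) = x^2/2 * u ^ (1-δ) := by
      have hu2 : (u:ℝ)^2 = u ^ ((2:ℕ):ℝ) := by rw [Real.rpow_natCast]
      have : u ^ ((2:ℕ):ℝ) * u ^ (-(1+δ)) = u ^ (1-δ) := by
        rw [← Real.rpow_add hu0, show ((2:ℕ):ℝ) + -(1+δ) = 1 - δ by push_cast; ring]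
      calc (u*x)^2/2 * u ^ (-(1+δ)) = x^2/2 * ((u:ℝ)^2 * u ^ (-(1+δ))) := by ring
        _ = x^2/2 * u ^ (1-δ) := by rw [hu2, this]
    calc F δ x u ≤ (u*x)^2/2 * u ^ (-(1+δ)) := mul_le_mul_of_nonneg_right hcos hw
      _ = x^2/2 * u ^ (1-δ) := key
  have h2 : IntegrableOn (F δ x) (Ioi 1) := by
    have hbig : IntegrableOn (fun u:ℝ => 2 * u ^ (-(1+δ))) (Ioi 1) :=
      (integrableOn_Ioi_rpow_of_lt (by linarith) one_pos).const_mul 2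
    refine hbig.mono' (((F_cont δ x).mono (Ioi_subset_Ioi zero_le_one)).aestronglyMeasurable
      measurableSet_Ioi) ?_
    refine (ae_restrict_iff' measurableSet_Ioi).mpr (Filter.Eventually.of_forall fun u hu => ?_)
    have hu0 : (0:ℝ) < u := lt_trans one_pos hu
    rw [Real.norm_eq_abs, abs_of_nonneg (F_nonneg δ x u hu0)]
    have hw : (0:ℝ) ≤ u ^ (-(1+δ)) := Real.rpow_nonneg hu0.le _
    have hcos : 1 - Real.cos (u*x) ≤ 2 := by nlinarith [Real.neg_one_le_cos (u*x)]
    exact mul_le_mul_of_nonneg_right hcos hw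
  have := h1.union h2
  rwa [Ioc_union_Ioi_eq_Ioi zero_le_one] at this

noncomputable def hInt (δ x : ℝ) : ℝ := ∫ u in Ioi 0, F δ x u

lemma hInt_scale {δ : ℝ} (hδ0 : 0 < δ) (x : ℝ) : hInt δ x = |x| ^ δ * hInt δ 1 := by
  rcases eq_or_ne x 0 with rfl | hx
  · have : F δ 0 = fun _ => 0 := by
      funext u; simp [F]
    rw [hInt, this, abs_zero, Real.zero_rpow hδ0.ne']
    simp
  · have habs : hInt δ x = hInt δ |x| := by
      unfold hInt
      congr 1
      funext u
      rcases le_or_gt 0 x with hx0 | hx0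
      · rw [abs_of_nonneg hx0]
      · rw [abs_of_neg hx0, F, F]
        have : Real.cos (u * -x) = Real.cos (u * x) := by
          rw [show u * -x = -(u*x) by ring, Real.cos_neg]
        rw [this]
    rw [habs]
    have hy : 0 < |x| := abs_pos.mpr hx
    set y := |x| with hydef
    have key : EqOn (F δ y) (fun u => y ^ (1+δ) * F δ 1 (y * u)) (Ioi 0) := by
      intro u hu
      have hu0 : (0:ℝ) < u := hu
      show (1 - Real.cos (u * y)) * u ^ (-(1+δ))
          = y ^ (1+δ) * ((1 - Real.cos (y * u * 1)) * (y*u) ^ (-(1+δ)))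
      rw [mul_one, Real.mul_rpow hy.le hu0.le]
      have hone : y ^ (1+δ) * y ^ (-(1+δ)) = 1 := by
        rw [← Real.rpow_add hy, show (1+δ) + -(1+δ) = 0 by ring, Real.rpow_zero]
      have hcos : Real.cos (y * u) = Real.cos (u * y) := by rw [mul_comm]
      rw [hcos]
      calc (1 - Real.cos (u * y)) * u ^ (-(1+δ))
          = (y ^ (1+δ) * y ^ (-(1+δ))) * ((1 - Real.cos (u * y)) * u ^ (-(1+δ))) := by
            rw [hone, one_mul]
        _ = y ^ (1+δ) * ((1 - Real.cos (u * y)) * (y ^ (-(1+δ)) * u ^ (-(1+δ)))) := by ring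
    unfold hInt
    rw [setIntegral_congr_fun measurableSet_Ioi key, integral_const_mul]
    have hsub := integral_comp_mul_left_Ioi (F δ 1) 0 hy
    rw [mul_zero] at hsub
    rw [hsub, smul_eq_mul]
    have : y ^ (1+δ) * y⁻¹ = y ^ δ := by
      rw [← Real.rpow_neg_one y, ← Real.rpow_add hy, show (1+δ) + (-1) = δ by ring]
    rw [← mul_assoc, this]

lemma hInt_pos {δ : ℝ} (hδ0 : 0 < δ) (hδ1 : δ ≤ 1) : 0 < hInt δ 1 := by
  have hπ := Real.pi_pos
  set c : ℝ := Real.pi ^ (-(1+δ)) with hc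
  have hcpos : 0 < c := Real.rpow_pos_of_pos hπ _
  have hlow : ∀ u ∈ Ioc (Real.pi/2) Real.pi, c ≤ F δ 1 u := by
    intro u hu
    have hu0 : 0 < u := lt_trans (by positivity) hu.1
    have h1 : 1 ≤ 1 - Real.cos (u*1) := by
      rw [mul_one]
      have := Real.cos_nonpos_of_pi_div_two_le_of_le (le_of_lt hu.1) (by linarith [hu.2])
      linarith
    have h2 : c ≤ u ^ (-(1+δ)) :=
      Real.rpow_le_rpow_of_nonpos hu0 hu.2 (by linarith)
    calc c = 1 * c := (one_mul c).symm
      _ ≤ (1 - Real.cos (u*1)) * u ^ (-(1+δ)) :=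
          mul_le_mul h1 h2 hcpos.le (by linarith [Real.neg_one_le_cos (u*1)])
      _ = F δ 1 u := rfl
  have hsub : Ioc (Real.pi/2) Real.pi ⊆ Ioi (0:ℝ) := fun u hu =>
    lt_trans (by positivity) hu.1
  have hmono : ∫ u in Ioc (Real.pi/2) Real.pi, F δ 1 u ≤ hInt δ 1 := by
    refine setIntegral_mono_set (F_integrable hδ0 hδ1 1)
      ((ae_restrict_iff' measurableSet_Ioi).mpr (Filter.Eventually.of_forall (F_nonneg δ 1)))
      (HasSubset.Subset.eventuallyLE hsub)
  have hconst : c * (Real.pi - Real.pi/2) ≤ ∫ u in Ioc (Real.pi/2) Real.pi, F δ 1 u := by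
    have hci : IntegrableOn (fun _ : ℝ => c) (Ioc (Real.pi/2) Real.pi) :=
      integrableOn_const measure_Ioc_lt_top.ne
    have hFi : IntegrableOn (F δ 1) (Ioc (Real.pi/2) Real.pi) :=
      (F_integrable hδ0 hδ1 1).mono_set hsub
    have := setIntegral_mono_on hci hFi measurableSet_Ioc hlow
    rw [setIntegral_const, Real.volume_real_Ioc_of_le (by linarith), smul_eq_mul] at this
    linarith [this]
  have : 0 < c * (Real.pi - Real.pi/2) := by
    apply mul_pos hcpos; linarith
  linarith




/-- The kernel `|z k|^δ + |z l|^δ - |z k - z l|^δ` is positive semidefinite. -/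
lemma psdf_negdef {δ : ℝ} (hδ0 : 0 < δ) (hδ1 : δ ≤ 1) {m : ℕ} (z : Fin m → ℝ) :
    PSDf (fun k l => |z k| ^ δ + |z l| ^ δ - |z k - z l| ^ δ) := by
  intro c
  show 0 ≤ ∑ k, ∑ l, c k * c l * (|z k| ^ δ + |z l| ^ δ - |z k - z l| ^ δ)
  set K := hInt δ 1 with hKdef
  have hK : 0 < K := hInt_pos hδ0 hδ1
  have habs : ∀ x : ℝ, |x| ^ δ = K⁻¹ * hInt δ x := by
    intro x; rw [hInt_scale hδ0 x, ← hKdef]; field_simp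
  have hFi : ∀ x : ℝ, IntegrableOn (F δ x) (Ioi 0) := F_integrable hδ0 hδ1
  have hint : ∀ k l : Fin m, Integrable
      (fun u => c k * c l * (F δ (z k) u + F δ (z l) u - F δ (z k - z l) u))
      (volume.restrict (Ioi 0)) := fun k l =>
    ((((hFi (z k)).add (hFi (z l))).sub (hFi (z k - z l))).const_mul _)
  have hentry : ∀ k l : Fin m, c k * c l * (|z k| ^ δ + |z l| ^ δ - |z k - z l| ^ δ)
      = K⁻¹ * (c k * c l * (hInt δ (z k) + hInt δ (z l) - hInt δ (z k - z l))) := by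
    intro k l; rw [habs, habs, habs]; ring
  simp only [hentry, ← Finset.mul_sum]
  refine mul_nonneg (inv_nonneg.mpr hK.le) ?_
  have e1 : ∀ k l : Fin m, c k * c l * (hInt δ (z k) + hInt δ (z l) - hInt δ (z k - z l))
      = ∫ u in Ioi 0, c k * c l * (F δ (z k) u + F δ (z l) u - F δ (z k - z l) u) := by
    intro k l
    have hadd : Integrable (fun u => F δ (z k) u + F δ (z l) u) (volume.restrict (Ioi 0)) :=
      (hFi (z k)).add (hFi (z l))
    rw [integral_const_mul, integral_sub hadd (hFi (z k - z l)), integral_add (hFi (z k)) (hFi (z l))]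
    rfl
  simp only [e1]
  have e2 : ∀ k : Fin m,
      ∑ l, (∫ u in Ioi 0, c k * c l * (F δ (z k) u + F δ (z l) u - F δ (z k - z l) u))
      = ∫ u in Ioi 0, ∑ l, c k * c l * (F δ (z k) u + F δ (z l) u - F δ (z k - z l) u) :=
    fun k => (integral_finset_sum _ (fun l _ => hint k l)).symm
  simp only [e2]
  rw [← integral_finset_sum _ (fun k _ => integrable_finset_sum _ (fun l _ => hint k l))]
  refine setIntegral_nonneg measurableSet_Ioi fun u hu => ?_
  have hw : (0:ℝ) ≤ u ^ (-(1+δ)) := Real.rpow_nonneg (le_of_lt hu) _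
  set q : Fin m → ℝ := fun k => c k * (1 - Real.cos (u * z k)) with hq
  set r : Fin m → ℝ := fun k => c k * Real.sin (u * z k) with hr
  have hterm : ∀ k l : Fin m, c k * c l * (F δ (z k) u + F δ (z l) u - F δ (z k - z l) u)
      = (q k * q l + r k * r l) * u ^ (-(1+δ)) := by
    intro k l
    show c k * c l * ((1 - Real.cos (u * z k)) * u ^ (-(1+δ))
        + (1 - Real.cos (u * z l)) * u ^ (-(1+δ))
        - (1 - Real.cos (u * (z k - z l))) * u ^ (-(1+δ)))
      = (q k * q l + r k * r l) * u ^ (-(1+δ))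
    rw [mul_sub u (z k) (z l), Real.cos_sub, hq, hr]
    ring
  simp only [hterm]
  have h4 : ∀ v : Fin m → ℝ, ∑ k, ∑ l, (v k * v l) * u ^ (-(1+δ))
      = (∑ k, v k)^2 * u ^ (-(1+δ)) := by
    intro v
    calc ∑ k, ∑ l, (v k * v l) * u ^ (-(1+δ))
        = ∑ k, (∑ l, v k * v l) * u ^ (-(1+δ)) :=
          Finset.sum_congr rfl fun k _ => (Finset.sum_mul _ _ _).symm
      _ = (∑ k, ∑ l, v k * v l) * u ^ (-(1+δ)) := (Finset.sum_mul _ _ _).symm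
      _ = ((∑ k, v k) * (∑ l, v l)) * u ^ (-(1+δ)) := by rw [← Finset.sum_mul_sum]
      _ = (∑ k, v k)^2 * u ^ (-(1+δ)) := by rw [sq]
  have e3 : ∑ k, ∑ l, (q k * q l + r k * r l) * u ^ (-(1+δ))
      = ((∑ k, q k)^2 + (∑ k, r k)^2) * u ^ (-(1+δ)) := by
    simp only [add_mul, Finset.sum_add_distrib]
    rw [h4 q, h4 r]
  rw [e3]
  exact mul_nonneg (by positivity) hw

/-- `exp (-(t * |x|^δ))` is a positive definite kernel on `ℝ`. -/
lemma psdf_exp_neg {δ : ℝ} (hδ0 : 0 < δ) (hδ1 : δ ≤ 1) {t : ℝ} (ht : 0 ≤ t)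
    {m : ℕ} (z : Fin m → ℝ) :
    PSDf (fun k l => Real.exp (-(t * |z k - z l| ^ δ))) := by
  set B : Fin m → Fin m → ℝ :=
    fun k l => t * (|z k| ^ δ + |z l| ^ δ - |z k - z l| ^ δ) with hB
  have hBsym : ∀ k l, B k l = B l k := by
    intro k l; simp only [hB, abs_sub_comm (z k) (z l)]; ring
  have hBpsd : PSDf B := by
    intro c
    have h0 := psdf_negdef hδ0 hδ1 z c
    have e : ∀ k l : Fin m, c k * c l * B k l
        = t * (c k * c l * (|z k| ^ δ + |z l| ^ δ - |z k - z l| ^ δ)) := by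
      intro k l; simp only [hB]; ring
    simp only [e, ← Finset.mul_sum]
    exact mul_nonneg ht h0
  have hexpB := hBpsd.expEntry hBsym
  intro c
  show 0 ≤ ∑ k, ∑ l, c k * c l * Real.exp (-(t * |z k - z l| ^ δ))
  have key := hexpB (fun k => c k * Real.exp (-(t * |z k| ^ δ)))
  have e : ∀ k l : Fin m,
      (c k * Real.exp (-(t * |z k| ^ δ))) * (c l * Real.exp (-(t * |z l| ^ δ)))
        * Real.exp (B k l)
      = c k * c l * Real.exp (-(t * |z k - z l| ^ δ)) := by
    intro k l
    have harg : -(t * |z k| ^ δ) + (-(t * |z l| ^ δ) + B k l) = -(t * |z k - z l| ^ δ) := by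
      simp only [hB]; ring
    calc (c k * Real.exp (-(t * |z k| ^ δ))) * (c l * Real.exp (-(t * |z l| ^ δ)))
        * Real.exp (B k l)
        = c k * c l * (Real.exp (-(t * |z k| ^ δ))
            * (Real.exp (-(t * |z l| ^ δ)) * Real.exp (B k l))) := by ring
      _ = c k * c l * Real.exp (-(t * |z k - z l| ^ δ)) := by
          rw [← Real.exp_add, ← Real.exp_add, harg]
  calc (0:ℝ) ≤ ∑ k, ∑ l, (c k * Real.exp (-(t * |z k| ^ δ)))
        * (c l * Real.exp (-(t * |z l| ^ δ))) * Real.exp (B k l) := key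
    _ = ∑ k, ∑ l, c k * c l * Real.exp (-(t * |z k - z l| ^ δ)) := by
      exact Finset.sum_congr rfl fun k _ => Finset.sum_congr rfl fun l _ => e k l


/-- The generalised Cauchy covariance `(1 + |x|^δ)^(-α)` is a positive definite kernel on `ℝ`. -/
lemma psdf_cauchy {δ α : ℝ} (hδ0 : 0 < δ) (hδ1 : δ ≤ 1) (hα : 0 ≤ α)
    {m : ℕ} (z : Fin m → ℝ) :
    PSDf (fun k l => (1 + |z k - z l| ^ δ) ^ (-α)) := by
  rcases hα.eq_or_lt with heq | hα'
  · intro c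
    show 0 ≤ ∑ k, ∑ l, c k * c l * (1 + |z k - z l| ^ δ) ^ (-α)
    simp only [← heq, neg_zero, Real.rpow_zero]
    exact psdf_const c
  intro c
  show 0 ≤ ∑ k, ∑ l, c k * c l * (1 + |z k - z l| ^ δ) ^ (-α)
  have hw0 : ∀ k l : Fin m, (0:ℝ) ≤ |z k - z l| ^ δ :=
    fun k l => Real.rpow_nonneg (abs_nonneg _) δ
  have hΓ : 0 < Real.Gamma α := Real.Gamma_pos_of_pos hα'
  have hgint : ∀ k l : Fin m, Integrable
      (fun t => c k * c l * (t ^ (α-1) * Real.exp (-((1 + |z k - z l| ^ δ) * t))))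
      (volume.restrict (Ioi 0)) := by
    intro k l
    refine Integrable.const_mul ?_ _
    have hbig := Real.GammaIntegral_convergent hα'
    refine hbig.mono' ?_ ?_
    · refine ContinuousOn.aestronglyMeasurable ?_ measurableSet_Ioi
      exact (continuousOn_id.rpow_const fun u hu => Or.inl (ne_of_gt hu)).mul
        (Real.continuous_exp.comp
          ((continuous_const.mul continuous_id).neg)).continuousOn
    · refine (ae_restrict_iff' measurableSet_Ioi).mpr (Filter.Eventually.of_forall fun t ht => ?_)
      have ht0 : (0:ℝ) < t := ht
      rw [Real.norm_eq_abs, abs_of_nonneg (by positivity)]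
      have h1 : Real.exp (-((1 + |z k - z l| ^ δ) * t)) ≤ Real.exp (-t) := by
        apply Real.exp_le_exp.mpr
        nlinarith [hw0 k l, ht0.le]
      calc t ^ (α-1) * Real.exp (-((1 + |z k - z l| ^ δ) * t))
          ≤ t ^ (α-1) * Real.exp (-t) :=
            mul_le_mul_of_nonneg_left h1 (Real.rpow_nonneg ht0.le _)
        _ = Real.exp (-t) * t ^ (α-1) := mul_comm _ _
  have hent : ∀ k l : Fin m, c k * c l * (1 + |z k - z l| ^ δ) ^ (-α)
      = (Real.Gamma α)⁻¹
        * ∫ t in Ioi 0, c k * c l * (t ^ (α-1) * Real.exp (-((1 + |z k - z l| ^ δ) * t))) := by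
    intro k l
    have h1w : (0:ℝ) < 1 + |z k - z l| ^ δ := by linarith [hw0 k l]
    rw [integral_const_mul, Real.integral_rpow_mul_exp_neg_mul_Ioi hα' h1w]
    have hpow : ((1:ℝ)/(1 + |z k - z l| ^ δ)) ^ α = (1 + |z k - z l| ^ δ) ^ (-α) := by
      rw [one_div, Real.inv_rpow h1w.le, ← Real.rpow_neg h1w.le]
    rw [hpow]
    field_simp
  simp only [hent, ← Finset.mul_sum]
  refine mul_nonneg (inv_nonneg.mpr hΓ.le) ?_
  have e2 : ∀ k : Fin m,
      ∑ l, (∫ t in Ioi 0, c k * c l * (t ^ (α-1) * Real.exp (-((1 + |z k - z l| ^ δ) * t))))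
      = ∫ t in Ioi 0, ∑ l, c k * c l * (t ^ (α-1) * Real.exp (-((1 + |z k - z l| ^ δ) * t))) :=
    fun k => (integral_finset_sum _ fun l _ => hgint k l).symm
  simp only [e2]
  rw [← integral_finset_sum _ (fun k _ => integrable_finset_sum _ fun l _ => hgint k l)]
  refine setIntegral_nonneg measurableSet_Ioi fun t ht => ?_
  have ht0 : (0:ℝ) < t := ht
  have hterm : ∀ k l : Fin m,
      c k * c l * (t ^ (α-1) * Real.exp (-((1 + |z k - z l| ^ δ) * t)))
      = (t ^ (α-1) * Real.exp (-t)) * (c k * c l * Real.exp (-(t * |z k - z l| ^ δ))) := by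
    intro k l
    have hsplit : Real.exp (-((1 + |z k - z l| ^ δ) * t))
        = Real.exp (-t) * Real.exp (-(t * |z k - z l| ^ δ)) := by
      rw [← Real.exp_add]
      congr 1
      ring
    rw [hsplit]
    ring
  simp only [hterm, ← Finset.mul_sum]
  exact mul_nonneg (by positivity) (psdf_exp_neg hδ0 hδ1 ht0.le z c)

/-- Products of even positive definite kernels, applied coordinatewise, are PSD. -/
lemma psdf_prod {n m : ℕ} (z : Fin m → Fin n → ℝ) (f : Fin n → ℝ → ℝ)
    (hf : ∀ (i : Fin n) (y : Fin m → ℝ), PSDf (fun k l => f i (y k - y l)))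
    (hfe : ∀ (i : Fin n) (x : ℝ), f i (-x) = f i x) (s : Finset (Fin n)) :
    PSDf (fun k l => ∏ i ∈ s, f i (z k i - z l i)) := by
  have main : ∀ s : Finset (Fin n),
      (∀ k l : Fin m, (∏ i ∈ s, f i (z k i - z l i)) = ∏ i ∈ s, f i (z l i - z k i))
      ∧ PSDf (fun k l => ∏ i ∈ s, f i (z k i - z l i)) := by
    intro s
    induction s using Finset.induction_on with
    | empty =>
        constructor
        · intro k l; simp
        · intro c; simpa using psdf_const c
    | @insert a s' ha ih =>
        have hsym1 : ∀ k l : Fin m, f a (z k a - z l a) = f a (z l a - z k a) := by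
          intro k l
          rw [← hfe a, neg_sub]
        constructor
        · intro k l
          rw [Finset.prod_insert ha, Finset.prod_insert ha, ih.1 k l, hsym1 k l]
        · have h1 : PSDf (fun k l : Fin m => f a (z k a - z l a)) := hf a (fun k => z k a)
          have h2 := PSDf.mul hsym1 ih.1 h1 ih.2
          intro c
          have h3 := h2 c
          have e : ∀ k l : Fin m,
              f a (z k a - z l a) * ∏ i ∈ s', f i (z k i - z l i)
              = ∏ i ∈ insert a s', f i (z k i - z l i) := by
            intro k l
            rw [Finset.prod_insert ha]
          calc (0:ℝ) ≤ ∑ k, ∑ l, c k * c l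
                * (f a (z k a - z l a) * ∏ i ∈ s', f i (z k i - z l i)) := h3
            _ = ∑ k, ∑ l, c k * c l * ∏ i ∈ insert a s', f i (z k i - z l i) := by
                exact Finset.sum_congr rfl fun k _ =>
                  Finset.sum_congr rfl fun l _ => by rw [e k l]
  exact (main s).2

end GCGA

/-- `C : V → ℝ` is a positive definite function on the additive group `V`. -/
def IsPosDefFn {V : Type*} [AddCommGroup V] (C : V → ℝ) : Prop :=
  ∀ (m : ℕ) (z : Fin m → V) (c : Fin m → ℝ),
    0 ≤ ∑ k : Fin m, ∑ l : Fin m, c k * c l * C (z k - z l)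

/-- Geometric average of generalised Cauchy covariances: for `δᵢ ∈ (0,1]`,
`εᵢ > 0` and nonnegative weights `θᵢ` summing to one, the function
`C(x₁,…,xₙ) = ∏ᵢ (1 + |xᵢ|^{δᵢ})^{−εᵢ θᵢ}` is positive definite on `ℝⁿ`. -/
theorem generalisedCauchy_geometricAverage_posDef
    (n : ℕ) (hn : 1 ≤ n) (δ ε θ : Fin n → ℝ)
    (hδ : ∀ i, δ i ∈ Set.Ioc (0 : ℝ) 1) (hε : ∀ i, 0 < ε i)
    (hθ : ∀ i, 0 ≤ θ i) (hθ1 : (∑ i, θ i) = 1) :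
    IsPosDefFn (fun x : Fin n → ℝ =>
      ∏ i, (1 + |x i| ^ δ i) ^ (-(ε i * θ i))) := by
  intro m z c
  have hPSD : GCGA.PSDf (fun k l : Fin m =>
      ∏ i, (1 + |z k i - z l i| ^ δ i) ^ (-(ε i * θ i))) := by
    refine GCGA.psdf_prod z (fun i x => (1 + |x| ^ δ i) ^ (-(ε i * θ i))) ?_ ?_ Finset.univ
    · intro i y
      exact GCGA.psdf_cauchy (hδ i).1 (hδ i).2 (mul_nonneg (hε i).le (hθ i)) y
    · intro i x
      simp only [abs_neg]
  have h := hPSD c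
  simpa [Pi.sub_apply] using h
end
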